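/- arXiv:2002.09427 — 2 statements merged into one kernel-verified Lean document; each statement's English description precedes it below -/
import Mathlib

section
/- If W_ψ(δ_x Q^n, π) ≤ Λ(x) r(n) with Λ ∈ L²(π) and ∑_{n=0}^∞ r(n) < ∞, then for every 1-Lipschitz, square-π-integrable, π-mean-zero function g, ∑_{n=0}^∞ ‖Q^n g‖_{L²(π)} < ∞. -/
/-!
The easy half of Kantorovich–Rubinstein duality: for every coupling `γ` of `δ_x Q^n` and `π`,
`Q^n g(x) = ∫ g dQ^n(x,·) - ∫ g dπ = ∫ (g(y) - g(z)) dγ`, which is at most `∫ ψ(y, z) dγ`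
because `g` is 1-Lipschitz. Hence `|Q^n g(x)| ≤ W_ψ(δ_x Q^n, π) ≤ Λ(x) r(n)`,
so `‖Q^n g‖ ≤ r(n) ‖Λ‖`, and the right-hand side is summable.
-/

open MeasureTheory ProbabilityTheory Filter
open scoped ENNReal

noncomputable def wassDist {X : Type*} [MeasurableSpace X] [PseudoEMetricSpace X]
    (μ ν : Measure X) : ℝ≥0∞ :=
  ⨅ γ ∈ {γ : Measure (X × X) | γ.map Prod.fst = μ ∧ γ.map Prod.snd = ν},
    ∫⁻ q, edist q.1 q.2 ∂γ

/-- The `n`-step transition kernel `Q^n`. -/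
noncomputable def kiter {X : Type*} [MeasurableSpace X] (Q : Kernel X X) : ℕ → Kernel X X
  | 0 => Kernel.id
  | n + 1 => Q.comp (kiter Q n)

theorem ofReal_abs_integral_sub_le_wassDist {X : Type*} [MeasurableSpace X]
    [PseudoMetricSpace X] [OpensMeasurableSpace X] {μ ν : Measure X} {g : X → ℝ}
    (hg : LipschitzWith 1 g) (hμ : Integrable g μ) (hν : Integrable g ν) :
    ENNReal.ofReal |∫ x, g x ∂μ - ∫ x, g x ∂ν| ≤ wassDist μ ν := by
  refine le_iInf₂ fun γ ⟨hfst, hsnd⟩ => ?_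
  have hgm : Measurable g := hg.continuous.measurable
  have hμγ : Integrable (fun q : X × X => g q.1) γ :=
    (integrable_map_measure hgm.aestronglyMeasurable measurable_fst.aemeasurable).mp (hfst ▸ hμ)
  have hνγ : Integrable (fun q : X × X => g q.2) γ :=
    (integrable_map_measure hgm.aestronglyMeasurable measurable_snd.aemeasurable).mp (hsnd ▸ hν)
  have hdiff : ∫ x, g x ∂μ - ∫ x, g x ∂ν = ∫ q, (g q.1 - g q.2) ∂γ := by
    rw [integral_sub hμγ hνγ, ← hfst, ← hsnd,
      integral_map measurable_fst.aemeasurable hgm.aestronglyMeasurable,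
      integral_map measurable_snd.aemeasurable hgm.aestronglyMeasurable]
  calc ENNReal.ofReal |∫ x, g x ∂μ - ∫ x, g x ∂ν|
      ≤ ENNReal.ofReal (∫ q, |g q.1 - g q.2| ∂γ) := by
        rw [hdiff]
        exact ENNReal.ofReal_le_ofReal abs_integral_le_integral_abs
    _ = ∫⁻ q, edist (g q.1) (g q.2) ∂γ := by
        have habs : Integrable (fun q : X × X => |g q.1 - g q.2|) γ := (hμγ.sub hνγ).abs
        rw [ofReal_integral_eq_lintegral_ofReal habs (Eventually.of_forall fun q => abs_nonneg _)]
        simp only [edist_dist, Real.dist_eq]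
    _ ≤ ∫⁻ q, edist q.1 q.2 ∂γ := lintegral_mono fun q => by simpa using hg.edist_le_mul q.1 q.2

theorem sqrt_integral_sq_le_mul_sqrt_integral_sq {X : Type*} [MeasurableSpace X] {μ : Measure X}
    {f Λ : X → ℝ} {c : ℝ} (hc : 0 ≤ c) (hΛ : Integrable (fun x => Λ x ^ 2) μ)
    (hf : ∀ᵐ x ∂μ, |f x| ≤ c * Λ x) :
    Real.sqrt (∫ x, f x ^ 2 ∂μ) ≤ c * Real.sqrt (∫ x, Λ x ^ 2 ∂μ) := by
  have hsq : ∫ x, f x ^ 2 ∂μ ≤ ∫ x, c ^ 2 * Λ x ^ 2 ∂μ := by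
    refine integral_mono_of_nonneg (.of_forall fun x => sq_nonneg _) (hΛ.const_mul _) ?_
    filter_upwards [hf] with x hx
    calc f x ^ 2 = |f x| ^ 2 := (sq_abs _).symm
      _ ≤ (c * Λ x) ^ 2 := pow_le_pow_left₀ (abs_nonneg _) hx 2
      _ = c ^ 2 * Λ x ^ 2 := mul_pow _ _ _
  calc Real.sqrt (∫ x, f x ^ 2 ∂μ) ≤ Real.sqrt (c ^ 2 * ∫ x, Λ x ^ 2 ∂μ) := by
        rw [← integral_const_mul]
        exact Real.sqrt_le_sqrt hsq
    _ = c * Real.sqrt (∫ x, Λ x ^ 2 ∂μ) := by rw [Real.sqrt_mul (sq_nonneg _), Real.sqrt_sq hc]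

theorem stmt_3_general {X : Type*} [MeasurableSpace X] [MetricSpace X] [BorelSpace X]
    (Q : Kernel X X) (π : Measure X) [IsProbabilityMeasure π]
    (Λ : X → ℝ) (hΛ : ∀ x, 0 ≤ Λ x) (hΛ2 : Integrable (fun x => (Λ x) ^ 2) π)
    (r : ℕ → ℝ) (hr : ∀ n, 0 ≤ r n) (hrsum : Summable r)
    (hW : ∀ x n, wassDist ((kiter Q n) x) π ≤ ENNReal.ofReal (Λ x * r n))
    (g : X → ℝ) (hg : LipschitzWith 1 g) (hg0 : ∫ x, g x ∂π = 0)
    (hg2 : Integrable (fun x => (g x) ^ 2) π)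
    (hgint : ∀ k x, Integrable g ((kiter Q k) x)) :
    Summable (fun n : ℕ => Real.sqrt (∫ x, (∫ z, g z ∂((kiter Q n) x)) ^ 2 ∂π)) := by
  have hgπ : Integrable g π :=
    ((memLp_two_iff_integrable_sq hg.continuous.aestronglyMeasurable).2 hg2).integrable one_le_two
  have hbound (n : ℕ) (x : X) : |∫ z, g z ∂((kiter Q n) x)| ≤ r n * Λ x := by
    have h := (ofReal_abs_integral_sub_le_wassDist hg (hgint n x) hgπ).trans (hW x n)
    rwa [hg0, sub_zero, ENNReal.ofReal_le_ofReal_iff (mul_nonneg (hΛ x) (hr n)), mul_comm] at h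
  refine Summable.of_nonneg_of_le (fun n => Real.sqrt_nonneg _) (fun n => ?_)
    (hrsum.mul_right (Real.sqrt (∫ x, Λ x ^ 2 ∂π)))
  exact sqrt_integral_sq_le_mul_sqrt_integral_sq (hr n) hΛ2 (.of_forall (hbound n))

/-- If `W_ψ(δ_x Q^n, π) ≤ Λ(x) r(n)` with `Λ ∈ L²(π)` and `∑ r(n) < ∞`, then for every
1-Lipschitz, square-`π`-integrable, `π`-mean-zero `g`, `∑_{n} ‖Q^n g‖_{L²(π)} < ∞`. -/
theorem stmt_3 {X : Type*} [MeasurableSpace X] [MetricSpace X] [PolishSpace X] [BorelSpace X]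
    (Q : Kernel X X) [IsMarkovKernel Q] (π : Measure X) [IsProbabilityMeasure π]
    (hinv : π.bind (fun x => Q x) = π)
    (Λ : X → ℝ) (hΛ : ∀ x, 0 ≤ Λ x) (hΛ2 : Integrable (fun x => (Λ x) ^ 2) π)
    (r : ℕ → ℝ) (hr : ∀ n, 0 ≤ r n) (hrsum : Summable r)
    (hW : ∀ x n, wassDist ((kiter Q n) x) π ≤ ENNReal.ofReal (Λ x * r n))
    (g : X → ℝ) (hg : LipschitzWith 1 g) (hg0 : ∫ x, g x ∂π = 0)
    (hg2 : Integrable (fun x => (g x) ^ 2) π)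
    (hgint : ∀ k x, Integrable g ((kiter Q k) x)) :
    Summable (fun n : ℕ => Real.sqrt (∫ x, (∫ z, g z ∂((kiter Q n) x)) ^ 2 ∂π)) :=
  stmt_3_general Q π Λ hΛ hΛ2 r hr hrsum hW g hg hg0 hg2 hgint
end

section
/- If a Markov chain is geometrically contractive with rate Δ ∈ (0,1) and its invariant measure π satisfies ∫∫ ψ(x,y)² π(dy) π(dx) < ∞, then for every 1-Lipschitz mean-zero g ∈ L²(π), ∑_{n=0}^∞ ‖Q^n g‖_{L²(π)} ≤ I / (1 − Δ), where I = [∫ (∫ ψ(x,y) π(dy))² π(dx)]^{1/2}. -/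
/-! Transporting a Lipschitz function along a coupling shows that `Q` maps `K`-Lipschitz functions
to `KΔ`-Lipschitz ones, so `Qⁿ g` is `Δⁿ`-Lipschitz. By invariance `Qⁿ g` has `π`-mean zero, hence
`|Qⁿ g x| = |∫ (Qⁿ g x - Qⁿ g y) π(dy)| ≤ Δⁿ ∫ ψ(x, y) π(dy)`, which gives `‖Qⁿ g‖_{L²(π)} ≤ Δⁿ I`;
summing the geometric series yields `I / (1 - Δ)`. -/

open MeasureTheory ProbabilityTheory Filter
open scoped ENNReal

open scoped NNReal

section Kernel

variable {α E : Type*} {mα : MeasurableSpace α} [NormedAddCommGroup E] [NormedSpace ℝ E]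

lemma kiter_succ' (Q : Kernel α α) (n : ℕ) : kiter Q (n + 1) = kiter Q n ∘ₖ Q := by
  induction n with
  | zero => exact (Kernel.comp_id Q).trans (Kernel.id_comp Q).symm
  | succ n ih =>
    change Q ∘ₖ kiter Q (n + 1) = (Q ∘ₖ kiter Q n) ∘ₖ Q
    rw [ih, Kernel.comp_assoc]

lemma ProbabilityTheory.Kernel.Invariant.kiter {Q : Kernel α α} {μ : Measure α}
    (hQ : Q.Invariant μ) (n : ℕ) : (kiter Q n).Invariant μ := by
  induction n with
  | zero => exact Measure.id_comp
  | succ n ih => exact hQ.comp ih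

lemma ProbabilityTheory.Kernel.Invariant.integrable_integral {κ : Kernel α α} {μ : Measure α}
    (hκ : κ.Invariant μ) {h : α → E} (hh : Integrable h μ) :
    Integrable (fun x => ∫ y, h y ∂κ x) μ := by
  rw [← hκ.def, Measure.comp_eq_comp_const_apply] at hh
  simpa using hh.integral_comp

lemma ProbabilityTheory.Kernel.Invariant.integral_integral {κ : Kernel α α} {μ : Measure α}
    (hκ : κ.Invariant μ) {h : α → E} (hh : Integrable h μ) :
    ∫ x, ∫ y, h y ∂κ x ∂μ = ∫ y, h y ∂μ := by
  rw [← hκ.def, Measure.comp_eq_comp_const_apply] at hh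
  calc ∫ x, ∫ y, h y ∂κ x ∂μ = ∫ y, h y ∂(κ ∘ₖ Kernel.const Unit μ) () := by
        rw [Kernel.integral_comp hh, Kernel.const_apply]
    _ = ∫ y, h y ∂μ := by rw [← Measure.comp_eq_comp_const_apply, hκ.def]

end Kernel

section Wasserstein

variable {X : Type*} [MeasurableSpace X] [PseudoEMetricSpace X]

lemma edist_integral_le_mul_lintegral_of_coupling {μ ν : Measure X} {γ : Measure (X × X)}
    (hγ₁ : γ.map Prod.fst = μ) (hγ₂ : γ.map Prod.snd = ν) {h : X → ℝ} {K : ℝ≥0}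
    (hh : LipschitzWith K h) (hμ : Integrable h μ) (hν : Integrable h ν) :
    edist (∫ x, h x ∂μ) (∫ x, h x ∂ν) ≤ K * ∫⁻ q, edist q.1 q.2 ∂γ := by
  subst hγ₁ hγ₂
  have h₁ : Integrable (fun q : X × X => h q.1) γ :=
    (integrable_map_measure hμ.1 measurable_fst.aemeasurable).mp hμ
  have h₂ : Integrable (fun q : X × X => h q.2) γ :=
    (integrable_map_measure hν.1 measurable_snd.aemeasurable).mp hν
  rw [integral_map measurable_fst.aemeasurable hμ.1, integral_map measurable_snd.aemeasurable hν.1,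
    edist_eq_enorm_sub, ← integral_sub h₁ h₂, ← lintegral_const_mul' _ _ ENNReal.coe_ne_top]
  refine (enorm_integral_le_lintegral_enorm _).trans (lintegral_mono fun q => ?_)
  rw [← edist_eq_enorm_sub]
  exact hh q.1 q.2

lemma edist_integral_le_mul_wassDist {μ ν : Measure X} {h : X → ℝ} {K : ℝ≥0} (hK : K ≠ 0)
    (hh : LipschitzWith K h) (hμ : Integrable h μ) (hν : Integrable h ν) :
    edist (∫ x, h x ∂μ) (∫ x, h x ∂ν) ≤ K * wassDist μ ν := by
  simp_rw [wassDist, ENNReal.mul_iInf_of_ne (ENNReal.coe_ne_zero.2 hK) ENNReal.coe_ne_top]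
  exact le_iInf₂ fun γ hγ => edist_integral_le_mul_lintegral_of_coupling hγ.1 hγ.2 hh hμ hν

lemma LipschitzWith.integral_kernel_of_wassDist_le {Q : Kernel X X} {δ K : ℝ≥0} {h : X → ℝ}
    (hK : K ≠ 0) (hQ : ∀ x y, wassDist (Q x) (Q y) ≤ δ * edist x y) (hh : LipschitzWith K h)
    (hint : ∀ x, Integrable h (Q x)) :
    LipschitzWith (K * δ) (fun x => ∫ y, h y ∂Q x) := fun x y =>
  calc edist (∫ z, h z ∂Q x) (∫ z, h z ∂Q y) ≤ K * wassDist (Q x) (Q y) :=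
        edist_integral_le_mul_wassDist hK hh (hint x) (hint y)
    _ ≤ K * (δ * edist x y) := by gcongr; exact hQ x y
    _ = ↑(K * δ) * edist x y := by rw [ENNReal.coe_mul, mul_assoc]

lemma lipschitzWith_integral_kiter [OpensMeasurableSpace X] {Q : Kernel X X} {δ : ℝ≥0}
    (hδ : δ ≠ 0) (hQ : ∀ x y, wassDist (Q x) (Q y) ≤ δ * edist x y) {g : X → ℝ}
    (hg : LipschitzWith 1 g) (hgint : ∀ n x, Integrable g (kiter Q n x)) (n : ℕ) :
    LipschitzWith (δ ^ n) (fun x => ∫ z, g z ∂kiter Q n x) := by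
  induction n with
  | zero =>
    simpa only [pow_zero, kiter, Kernel.id_apply,
      integral_dirac' _ _ hg.continuous.stronglyMeasurable] using hg
  | succ n ih =>
    have hint : ∀ x, Integrable g ((kiter Q n ∘ₖ Q) x) := by
      simpa only [kiter_succ'] using hgint (n + 1)
    have hstep : (fun x => ∫ z, g z ∂kiter Q (n + 1) x) =
        fun x => ∫ y, ∫ z, g z ∂kiter Q n y ∂Q x := by
      funext x
      rw [kiter_succ', Kernel.integral_comp (hint x)]
    rw [hstep, pow_succ]
    exact ih.integral_kernel_of_wassDist_le (pow_ne_zero n hδ) hQ fun x => (hint x).integral_comp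

end Wasserstein

section L2

variable {α : Type*} [MeasurableSpace α] {μ : Measure α}

lemma sq_integral_le_integral_sq [IsProbabilityMeasure μ] {f : α → ℝ} (hf : MemLp f 2 μ) :
    (∫ x, f x ∂μ) ^ 2 ≤ ∫ x, f x ^ 2 ∂μ := by
  have h := variance_eq_sub hf ▸ variance_nonneg f μ
  simpa only [Pi.pow_apply, sub_nonneg] using h

lemma MeasureTheory.Integrable.of_integrable_sq [IsFiniteMeasure μ] {f : α → ℝ}
    (hf : AEStronglyMeasurable f μ) (hf2 : Integrable (fun x => f x ^ 2) μ) : Integrable f μ :=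
  ((memLp_two_iff_integrable_sq hf).2 hf2).integrable one_le_two

lemma sqrt_integral_sq_le_of_abs_le {f F : α → ℝ} {c : ℝ} (hc : 0 ≤ c)
    (hF : Integrable (fun x => F x ^ 2) μ) (hfF : ∀ x, |f x| ≤ c * F x) :
    √(∫ x, f x ^ 2 ∂μ) ≤ c * √(∫ x, F x ^ 2 ∂μ) := by
  have hpt : ∀ x, f x ^ 2 ≤ c ^ 2 * F x ^ 2 := fun x => by
    rw [← mul_pow, ← sq_abs (f x)]
    exact pow_le_pow_left₀ (abs_nonneg _) (hfF x) 2
  have hint : ∫ x, f x ^ 2 ∂μ ≤ c ^ 2 * ∫ x, F x ^ 2 ∂μ := by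
    rw [← integral_const_mul]
    exact integral_mono_of_nonneg (.of_forall fun x => sq_nonneg _) (hF.const_mul _)
      (.of_forall hpt)
  calc √(∫ x, f x ^ 2 ∂μ) ≤ √(c ^ 2 * ∫ x, F x ^ 2 ∂μ) := Real.sqrt_le_sqrt hint
    _ = c * √(∫ x, F x ^ 2 ∂μ) := by rw [Real.sqrt_mul (sq_nonneg c), Real.sqrt_sq hc]

end L2

section Metric

variable {X : Type*} [MeasurableSpace X] [PseudoMetricSpace X] {μ : Measure X}
  [IsProbabilityMeasure μ]

lemma abs_le_mul_integral_dist_of_integral_eq_zero {f : X → ℝ} {K : ℝ≥0}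
    (hf : LipschitzWith K f) (hfi : Integrable f μ) (hf0 : ∫ y, f y ∂μ = 0) {x : X}
    (hx : Integrable (fun y => dist x y) μ) :
    |f x| ≤ K * ∫ y, dist x y ∂μ :=
  calc |f x| = |∫ y, (f x - f y) ∂μ| := by
        rw [integral_sub (integrable_const _) hfi, hf0, integral_const]; simp
    _ ≤ ∫ y, |f x - f y| ∂μ := abs_integral_le_integral_abs
    _ ≤ ∫ y, K * dist x y ∂μ :=
        integral_mono ((integrable_const _).sub hfi).abs (hx.const_mul _) fun y => by
          simpa only [Real.dist_eq] using hf.dist_le_mul x y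
    _ = K * ∫ y, dist x y ∂μ := integral_const_mul _ _

lemma lipschitzWith_one_integral_dist (hd : ∀ x, Integrable (fun y => dist x y) μ) :
    LipschitzWith 1 (fun x => ∫ y, dist x y ∂μ) :=
  LipschitzWith.of_dist_le_mul fun x x' => by
    rw [Real.dist_eq, ← integral_sub (hd x) (hd x'), NNReal.coe_one, one_mul]
    calc |∫ y, (dist x y - dist x' y) ∂μ| ≤ ∫ y, |dist x y - dist x' y| ∂μ :=
          abs_integral_le_integral_abs
      _ ≤ ∫ _, dist x x' ∂μ :=
          integral_mono ((hd x).sub (hd x')).abs (integrable_const _) (abs_dist_sub_le x x')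
      _ = dist x x' := by simp

lemma integrable_sq_integral_dist [OpensMeasurableSpace X]
    (hd2 : ∀ x, Integrable (fun y => dist x y ^ 2) μ)
    (hD2 : Integrable (fun x => ∫ y, dist x y ^ 2 ∂μ) μ) :
    Integrable (fun x => (∫ y, dist x y ∂μ) ^ 2) μ := by
  have hd : ∀ x, MemLp (fun y => dist x y) 2 μ := fun x =>
    (memLp_two_iff_integrable_sq (continuous_const.dist continuous_id).aestronglyMeasurable).2
      (hd2 x)
  have hD := lipschitzWith_one_integral_dist fun x => (hd x).integrable one_le_two
  refine hD2.mono' (hD.continuous.pow 2).aestronglyMeasurable (.of_forall fun x => ?_)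
  rw [Real.norm_eq_abs, abs_of_nonneg (sq_nonneg _)]
  exact sq_integral_le_integral_sq (hd x)

end Metric

lemma summable_and_tsum_le_of_le_geometric {a : ℕ → ℝ} {r C : ℝ} (hr₀ : 0 ≤ r) (hr₁ : r < 1)
    (ha₀ : ∀ n, 0 ≤ a n) (ha : ∀ n, a n ≤ r ^ n * C) :
    Summable a ∧ ∑' n, a n ≤ C / (1 - r) := by
  have hgeom : HasSum (fun n => r ^ n * C) ((1 - r)⁻¹ * C) :=
    (hasSum_geometric_of_lt_one hr₀ hr₁).mul_right C
  have hsum : Summable a := .of_nonneg_of_le ha₀ ha hgeom.summable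
  refine ⟨hsum, ?_⟩
  rw [div_eq_inv_mul]
  exact hasSum_le ha hsum.hasSum hgeom

theorem stmt_7_general {X : Type*} [MeasurableSpace X] [MetricSpace X] [BorelSpace X]
    (Q : Kernel X X) (π : Measure X) [IsProbabilityMeasure π]
    (hinv : π.bind (fun x => Q x) = π)
    (Δ : ℝ) (hΔ0 : 0 < Δ) (hΔ1 : Δ < 1)
    (hGC : ∀ x y : X, wassDist (Q x) (Q y) ≤ ENNReal.ofReal (Δ * dist x y))
    (hπ2 : Integrable (fun x => ∫ y, (dist x y) ^ 2 ∂π) π)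
    (hπ2' : ∀ x, Integrable (fun y => (dist x y) ^ 2) π)
    (g : X → ℝ) (hg : LipschitzWith 1 g) (hg0 : ∫ x, g x ∂π = 0)
    (hg2 : Integrable (fun x => (g x) ^ 2) π)
    (hgint : ∀ k x, Integrable g ((kiter Q k) x)) :
    Summable (fun n : ℕ => Real.sqrt (∫ x, (∫ z, g z ∂((kiter Q n) x)) ^ 2 ∂π)) ∧
      (∑' n : ℕ, Real.sqrt (∫ x, (∫ z, g z ∂((kiter Q n) x)) ^ 2 ∂π)) ≤
        Real.sqrt (∫ x, (∫ y, dist x y ∂π) ^ 2 ∂π) / (1 - Δ) := by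
  have hQ : ∀ x y, wassDist (Q x) (Q y) ≤ Δ.toNNReal * edist x y := fun x y =>
    (hGC x y).trans_eq (by rw [ENNReal.ofReal_mul hΔ0.le, edist_dist]; rfl)
  have hLip := lipschitzWith_integral_kiter (by simpa using hΔ0) hQ hg hgint
  have hgπ : Integrable g π := .of_integrable_sq hg.continuous.aestronglyMeasurable hg2
  have hdist : ∀ x, Integrable (fun y => dist x y) π := fun x =>
    .of_integrable_sq (continuous_const.dist continuous_id).aestronglyMeasurable (hπ2' x)
  have hbound : ∀ n x, |∫ z, g z ∂kiter Q n x| ≤ Δ ^ n * ∫ y, dist x y ∂π := fun n x => by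
    have hn : (kiter Q n).Invariant π := Kernel.Invariant.kiter hinv n
    simpa only [NNReal.coe_pow, Real.coe_toNNReal _ hΔ0.le] using
      abs_le_mul_integral_dist_of_integral_eq_zero (hLip n) (hn.integrable_integral hgπ)
        (by rw [hn.integral_integral hgπ, hg0]) (hdist x)
  exact summable_and_tsum_le_of_le_geometric hΔ0.le hΔ1 (fun n => Real.sqrt_nonneg _) fun n =>
    sqrt_integral_sq_le_of_abs_le (by positivity) (integrable_sq_integral_dist hπ2' hπ2) (hbound n)

/-- If a Markov chain is geometrically contractive with rate `Δ ∈ (0,1)` and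
`∫∫ ψ(x,y)² π(dy) π(dx) < ∞`, then for every 1-Lipschitz mean-zero `g ∈ L²(π)`,
`∑_{n≥0} ‖Q^n g‖_{L²(π)} ≤ I / (1 − Δ)` where `I = [∫ (∫ ψ(x,y) π(dy))² π(dx)]^{1/2}`. -/
theorem stmt_7 {X : Type*} [MeasurableSpace X] [MetricSpace X] [PolishSpace X] [BorelSpace X]
    (Q : Kernel X X) [IsMarkovKernel Q] (π : Measure X) [IsProbabilityMeasure π]
    (hinv : π.bind (fun x => Q x) = π)
    (Δ : ℝ) (hΔ0 : 0 < Δ) (hΔ1 : Δ < 1)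
    (hGC : ∀ x y : X, wassDist (Q x) (Q y) ≤ ENNReal.ofReal (Δ * dist x y))
    (hπ2 : Integrable (fun x => ∫ y, (dist x y) ^ 2 ∂π) π)
    (hπ2' : ∀ x, Integrable (fun y => (dist x y) ^ 2) π)
    (g : X → ℝ) (hg : LipschitzWith 1 g) (hg0 : ∫ x, g x ∂π = 0)
    (hg2 : Integrable (fun x => (g x) ^ 2) π)
    (hgint : ∀ k x, Integrable g ((kiter Q k) x)) :
    Summable (fun n : ℕ => Real.sqrt (∫ x, (∫ z, g z ∂((kiter Q n) x)) ^ 2 ∂π)) ∧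
      (∑' n : ℕ, Real.sqrt (∫ x, (∫ z, g z ∂((kiter Q n) x)) ^ 2 ∂π)) ≤
        Real.sqrt (∫ x, (∫ y, dist x y ∂π) ^ 2 ∂π) / (1 - Δ) :=
  stmt_7_general Q π hinv Δ hΔ0 hΔ1 hGC hπ2 hπ2' g hg hg0 hg2 hgint
end
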